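/- arXiv:1511.01976 — 2 statements merged into one kernel-verified Lean document; each statement's English description precedes it below -/
import Mathlib

section
/- First Welfare Theorem for exchange economies with monotone preferences: if (X, P) is a competitive (Walrasian) equilibrium of an exchange economy with strictly increasing utility functions, then the allocation X is Pareto optimal. -/
/-!
At equilibrium prices, a bundle that some consumer strictly prefers to her equilibrium bundle
costs more than her endowment, and by local non-satiation (a consequence of strict monotonicity)
a bundle she weakly prefers costs at least as much. Summing over consumers, a Pareto improvement
would cost strictly more than the aggregate endowment, which nonnegative prices forbid for a
feasible allocation.
-/

open Finset

/-- Dot product of two price/quantity vectors. -/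
def dot {M : ℕ} (P x : Fin M → ℝ) : ℝ := ∑ m, P m * x m

/-- A utility on nonnegative bundles is strictly increasing if enlarging the
bundle (componentwise `≤` with at least one strict coordinate) strictly
increases utility. -/
def StrictlyIncreasingUtility (M : ℕ) (u : (Fin M → ℝ) → ℝ) : Prop :=
  ∀ x y : Fin M → ℝ, (∀ m, 0 ≤ x m) → (∀ m, 0 ≤ y m) →
    x ≤ y → x ≠ y → u x < u y

section Dot

variable {M : ℕ}

lemma dot_add_const (P x : Fin M → ℝ) (c : ℝ) :
    dot P (x + fun _ => c) = dot P x + (∑ m, P m) * c := by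
  simp only [dot, Pi.add_apply, mul_add, sum_add_distrib, sum_mul]

lemma dot_le_dot {P x y : Fin M → ℝ} (hP : ∀ m, 0 ≤ P m) (hxy : ∀ m, x m ≤ y m) :
    dot P x ≤ dot P y :=
  sum_le_sum fun m _ => mul_le_mul_of_nonneg_left (hxy m) (hP m)

lemma dot_sum {ι : Type*} (s : Finset ι) (P : Fin M → ℝ) (Y : ι → Fin M → ℝ) :
    dot P (∑ i ∈ s, Y i) = ∑ i ∈ s, dot P (Y i) := by
  simp only [dot, Finset.sum_apply, mul_sum]
  exact sum_comm

end Dot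

lemma StrictlyIncreasingUtility.le_dot_of_le {M : ℕ} [NeZero M] {u : (Fin M → ℝ) → ℝ}
    (hu : StrictlyIncreasingUtility M u) {P : Fin M → ℝ} (hP : ∀ m, 0 ≤ P m) {w : ℝ}
    {x y : Fin M → ℝ} (hx : ∀ z : Fin M → ℝ, (∀ m, 0 ≤ z m) → dot P z ≤ w → u z ≤ u x)
    (hy : ∀ m, 0 ≤ y m) (hxy : u x ≤ u y) : w ≤ dot P y := by
  by_contra! hcheap
  have hS : 0 ≤ ∑ m, P m := sum_nonneg fun m _ => hP m
  -- spread the unspent wealth evenly over all goods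
  set ε := (w - dot P y) / (∑ m, P m + 1)
  have hε : 0 < ε := div_pos (by linarith) (by linarith)
  set z : Fin M → ℝ := y + fun _ => ε
  have hz : ∀ m, 0 ≤ z m := fun m => add_nonneg (hy m) hε.le
  have hzw : dot P z ≤ w := by
    have : ε * (∑ m, P m + 1) = w - dot P y := div_mul_cancel₀ _ (by linarith)
    rw [dot_add_const]
    linarith
  have hyz : u y < u z := by
    refine hu y z hy hz (fun m => le_add_of_nonneg_right hε.le) fun h => ?_
    have := congrFun h 0
    simp only [z, Pi.add_apply, left_eq_add] at this
    exact hε.ne' this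
  linarith [hx z hz hzw]

theorem first_welfare_theorem_general
    (N M : ℕ) (u : Fin N → (Fin M → ℝ) → ℝ)
    (Q : Fin N → Fin M → ℝ)
    (hmono : ∀ n, StrictlyIncreasingUtility M (u n))
    (X : Fin N → Fin M → ℝ) (P : Fin M → ℝ) (hP : ∀ m, 0 ≤ P m)
    -- each `X n` maximizes `u n` over the budget set
    (hmax : ∀ n, ∀ x : Fin M → ℝ, (∀ m, 0 ≤ x m) →
        dot P x ≤ dot P (Q n) → u n x ≤ u n (X n)) :
    ¬ ∃ X' : Fin N → Fin M → ℝ,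
        (∀ n m, 0 ≤ X' n m) ∧ (∀ m, ∑ n, X' n m ≤ ∑ n, Q n m) ∧
        (∀ n, u n (X n) ≤ u n (X' n)) ∧ (∃ n, u n (X n) < u n (X' n)) := by
  rintro ⟨X', hX'pos, hfeas, hge, n₀, hlt⟩
  -- with no goods all bundles coincide, so no one could strictly improve
  have : NeZero M := ⟨by rintro rfl; exact hlt.ne (congrArg (u n₀) (Subsingleton.elim _ _))⟩
  have hcost : ∀ n, dot P (Q n) ≤ dot P (X' n) := fun n =>
    (hmono n).le_dot_of_le hP (hmax n) (hX'pos n) (hge n)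
  have hcost₀ : dot P (Q n₀) < dot P (X' n₀) :=
    lt_of_not_ge fun h => (hmax n₀ _ (hX'pos n₀) h).not_gt hlt
  have hvalue : dot P (∑ n, X' n) ≤ dot P (∑ n, Q n) :=
    dot_le_dot hP fun m => by simpa only [Finset.sum_apply] using hfeas m
  rw [dot_sum, dot_sum] at hvalue
  exact hvalue.not_gt (sum_lt_sum (fun n _ => hcost n) ⟨n₀, mem_univ _, hcost₀⟩)

/-- First Welfare Theorem: if `(X, P)` is a Walrasian
equilibrium of an exchange economy with strictly increasing utilities, then
the allocation `X` is Pareto optimal. -/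
theorem first_welfare_theorem
    (N M : ℕ) (u : Fin N → (Fin M → ℝ) → ℝ)
    (Q : Fin N → Fin M → ℝ) (hQ : ∀ n m, 0 ≤ Q n m)
    (hmono : ∀ n, StrictlyIncreasingUtility M (u n))
    (X : Fin N → Fin M → ℝ) (P : Fin M → ℝ) (hP : ∀ m, 0 ≤ P m)
    (hXpos : ∀ n m, 0 ≤ X n m)
    -- each `X n` maximizes `u n` over the budget set
    (hbudget : ∀ n, dot P (X n) ≤ dot P (Q n))
    (hmax : ∀ n, ∀ x : Fin M → ℝ, (∀ m, 0 ≤ x m) →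
        dot P x ≤ dot P (Q n) → u n x ≤ u n (X n))
    -- markets clear
    (hclear : ∀ m, ∑ n, X n m = ∑ n, Q n m) :
    ¬ ∃ X' : Fin N → Fin M → ℝ,
        (∀ n m, 0 ≤ X' n m) ∧ (∀ m, ∑ n, X' n m ≤ ∑ n, Q n m) ∧
        (∀ n, u n (X n) ≤ u n (X' n)) ∧ (∃ n, u n (X n) < u n (X' n)) :=
  first_welfare_theorem_general N M u Q hmono X P hP hmax
end

section
/- If the aggregate excess demand function z : ℝ_{>0}^M → ℝ^M is homogeneous of degree zero, satisfies Walras' law (P·z(P) = 0 for all P), and satisfies the gross substitutes condition (if p'_k > p_k for one good k and p'_m = p_m for all m ≠ k, then z_m(P') > z_m(P) for all m ≠ k), then there is at most one equilibrium price vector up to positive scaling; i.e., if z(P) = 0 and z(P') = 0 then P' = λP for some λ > 0. -/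
open Finset

/-- Positivity of a price vector. -/
def PosPrice {M : ℕ} (P : Fin M → ℝ) : Prop := ∀ m, 0 < P m

/-!
Scale `P` by the largest ratio `λ = P' k / P k`, so that `P' ≤ λ • P` with equality at `k`.
Raising the prices of `P'` one good at a time up to `λ • P` never lowers the excess demand for
`k` and, by gross substitutes, strictly raises it if some price actually moves. Since
`z (λ • P) = z P = 0 = z P'`, no price moves, i.e. `P' = λ • P`.
-/

def GrossSubstitutes {ι : Type*} (z : (ι → ℝ) → ι → ℝ) : Prop :=
  ∀ P P' : ι → ℝ, (∀ m, 0 < P m) → (∀ m, 0 < P' m) →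
    ∀ k, P k < P' k → (∀ m, m ≠ k → P' m = P m) → ∀ m, m ≠ k → z P m < z P' m

namespace GrossSubstitutes

variable {ι : Type*} [DecidableEq ι] {z : (ι → ℝ) → ι → ℝ}

theorem apply_lt_update (hz : GrossSubstitutes z) {Q : ι → ℝ} (hQ : ∀ m, 0 < Q m) {j k : ι}
    (hjk : j ≠ k) {x : ℝ} (hx : Q j < x) : z Q k < z (Function.update Q j x) k := by
  refine hz Q _ hQ (fun m => ?_) j (by simpa using hx) (fun m hm => by simp [hm]) k hjk.symm
  rcases eq_or_ne m j with rfl | hm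
  · simpa using (hQ m).trans hx
  · simpa [hm] using hQ m

theorem apply_le_update (hz : GrossSubstitutes z) {Q : ι → ℝ} (hQ : ∀ m, 0 < Q m) {j k : ι}
    (hjk : j ≠ k) {x : ℝ} (hx : Q j ≤ x) : z Q k ≤ z (Function.update Q j x) k := by
  rcases hx.eq_or_lt with rfl | hx
  · simp
  · exact (hz.apply_lt_update hQ hjk hx).le

theorem apply_le_piecewise (hz : GrossSubstitutes z) {P P' : ι → ℝ} (hP : ∀ m, 0 < P m)
    (hle : P ≤ P') {k : ι} (T : Finset ι) (hkT : k ∉ T) : z P k ≤ z (T.piecewise P' P) k := by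
  induction T using Finset.induction_on with
  | empty => simp
  | @insert j T hjT ih =>
    have hkT' : k ∉ T := fun h => hkT (mem_insert_of_mem h)
    have hpos : ∀ m, 0 < T.piecewise P' P m := fun m => by
      by_cases hm : m ∈ T <;> simp [hm, hP m, (hP m).trans_le (hle m)]
    rw [piecewise_insert]
    refine (ih hkT').trans (hz.apply_le_update hpos (by rintro rfl; exact hkT (mem_insert_self _ T)) ?_)
    simpa [hjT] using hle j

theorem apply_le_of_le (hz : GrossSubstitutes z) [Fintype ι] {P P' : ι → ℝ}
    (hP : ∀ m, 0 < P m) (hle : P ≤ P') {k : ι} (hk : P k = P' k) : z P k ≤ z P' k := by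
  have hP' : (univ.erase k).piecewise P' P = P' := by
    ext m
    rcases eq_or_ne m k with rfl | hm
    · simp [hk]
    · simp [hm]
  simpa [hP'] using hz.apply_le_piecewise hP hle (univ.erase k) (notMem_erase k univ)

theorem apply_lt_of_le_of_ne (hz : GrossSubstitutes z) [Fintype ι] {P P' : ι → ℝ}
    (hP : ∀ m, 0 < P m) (hle : P ≤ P') {k : ι} (hk : P k = P' k) (hne : P ≠ P') :
    z P k < z P' k := by
  obtain ⟨j, hj⟩ := Function.ne_iff.1 hne
  have hjk : j ≠ k := fun h => hj (h ▸ hk)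
  have hjlt : P j < P' j := (hle j).lt_of_ne hj
  have hupd_le : Function.update P j (P' j) ≤ P' := fun m => by
    rcases eq_or_ne m j with rfl | hm
    · simp
    · simpa [hm] using hle m
  calc z P k < z (Function.update P j (P' j)) k := hz.apply_lt_update hP hjk hjlt
    _ ≤ z P' k := hz.apply_le_of_le (fun m => (hP m).trans_le (le_update_self_iff.2 hjlt.le m))
        hupd_le (by simpa [hjk.symm] using hk)

end GrossSubstitutes

theorem exists_pos_le_smul_apply_eq {ι : Type*} [Finite ι] [Nonempty ι] {P P' : ι → ℝ}
    (hP : ∀ m, 0 < P m) (hP' : ∀ m, 0 < P' m) :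
    ∃ lam : ℝ, 0 < lam ∧ P' ≤ lam • P ∧ ∃ k, P' k = (lam • P) k := by
  obtain ⟨k, hk⟩ := Finite.exists_max fun m => P' m / P m
  refine ⟨P' k / P k, div_pos (hP' k) (hP k), fun m => ?_, k, ?_⟩
  · simpa [← div_le_iff₀ (hP m)] using hk m
  · simp [div_mul_cancel₀ _ (hP k).ne']

theorem equilibrium_unique_up_to_scaling_general
    (M : ℕ) (z : (Fin M → ℝ) → Fin M → ℝ)
    (hhom : ∀ P : Fin M → ℝ, PosPrice P → ∀ lam : ℝ, 0 < lam →
        z (lam • P) = z P)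
    (hgs : ∀ P P' : Fin M → ℝ, PosPrice P → PosPrice P' →
        ∀ k : Fin M, P k < P' k → (∀ m, m ≠ k → P' m = P m) →
        ∀ m, m ≠ k → z P m < z P' m)
    (P P' : Fin M → ℝ) (hP : PosPrice P) (hP' : PosPrice P')
    (heq : z P = 0) (heq' : z P' = 0) :
    ∃ lam : ℝ, 0 < lam ∧ P' = lam • P := by
  cases isEmpty_or_nonempty (Fin M)
  · exact ⟨1, one_pos, Subsingleton.elim _ _⟩
  obtain ⟨lam, hlam, hle, k, hk⟩ := exists_pos_le_smul_apply_eq hP hP'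
  refine ⟨lam, hlam, by_contra fun hne => ?_⟩
  have hlt := GrossSubstitutes.apply_lt_of_le_of_ne hgs hP' hle hk hne
  rw [hhom P hP lam hlam, heq, heq'] at hlt
  exact lt_irrefl _ hlt

/-- if the aggregate excess demand is homogeneous of degree zero,
satisfies Walras' law and the gross substitutes condition, then the
equilibrium price vector is unique up to positive scaling. -/
theorem equilibrium_unique_up_to_scaling
    (M : ℕ) (z : (Fin M → ℝ) → Fin M → ℝ)
    (hhom : ∀ P : Fin M → ℝ, PosPrice P → ∀ lam : ℝ, 0 < lam →
        z (lam • P) = z P)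
    (hwalras : ∀ P : Fin M → ℝ, PosPrice P → ∑ m, P m * z P m = 0)
    (hgs : ∀ P P' : Fin M → ℝ, PosPrice P → PosPrice P' →
        ∀ k : Fin M, P k < P' k → (∀ m, m ≠ k → P' m = P m) →
        ∀ m, m ≠ k → z P m < z P' m)
    (P P' : Fin M → ℝ) (hP : PosPrice P) (hP' : PosPrice P')
    (heq : z P = 0) (heq' : z P' = 0) :
    ∃ lam : ℝ, 0 < lam ∧ P' = lam • P :=
  equilibrium_unique_up_to_scaling_general M z hhom hgs P P' hP hP' heq heq'
end
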